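/- Let ρ and σ be d×d density matrices with σ positive definite. Then the min-relative entropy is bounded by the relative entropy: −log₂ F(ρ,σ) ≤ Tr[ρ · log₂ρ] − Tr[ρ · log₂σ], where Tr[ρ · log₂ρ] = Σ_i λ_i log₂ λ_i over the eigenvalues λ_i of ρ with the convention 0·log₂0 = 0, and log₂σ is obtained by applying log₂ to the eigenvalues of σ in its spectral decomposition. -/

import Mathlib

open Matrix Kronecker
open scoped ComplexOrder Classical

/-- Positive semidefinite square root of a matrix (zero if not PSD). -/
noncomputable def matSqrt {n : Type*} [Fintype n] [DecidableEq n] (A : Matrix n n ℂ) :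
    Matrix n n ℂ :=
  if h : A.PosSemidef then
    (h.1.eigenvectorUnitary : Matrix n n ℂ) *
      Matrix.diagonal ((↑) ∘ (Real.sqrt ∘ h.1.eigenvalues)) *
      (star h.1.eigenvectorUnitary : Matrix n n ℂ)
  else 0

/-- Fidelity `F(ρ,σ) = (Tr √(√ρ σ √ρ))²`. -/
noncomputable def fidelity {n : Type*} [Fintype n] [DecidableEq n] (ρ σ : Matrix n n ℂ) : ℝ :=
  ((matSqrt (matSqrt ρ * σ * matSqrt ρ)).trace).re ^ 2

/-- A density matrix: positive semidefinite with trace 1. -/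
def IsDensityMatrix {n : Type*} [Fintype n] [DecidableEq n] (ρ : Matrix n n ℂ) : Prop :=
  ρ.PosSemidef ∧ ρ.trace = 1

/-- Incoherent (diagonal) matrix in the computational basis. -/
def IsIncoherent {n : Type*} [Fintype n] [DecidableEq n] (δ : Matrix n n ℂ) : Prop :=
  ∀ i j, i ≠ j → δ i j = 0

/-- Min-relative entropy `D_min(ρ‖σ) = -log₂ F(ρ,σ)`. -/
noncomputable def Dmin {n : Type*} [Fintype n] [DecidableEq n] (ρ σ : Matrix n n ℂ) : ℝ :=
  - Real.logb 2 (fidelity ρ σ)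

/-- Max-relative entropy `D_max(ρ‖σ) = log₂ inf {λ | λσ - ρ ⪰ 0}`. -/
noncomputable def Dmax {n : Type*} [Fintype n] [DecidableEq n] (ρ σ : Matrix n n ℂ) : ℝ :=
  Real.logb 2 (sInf {l : ℝ | (l • σ - ρ).PosSemidef})

/-- Min-entropy of coherence: infimum of `D_min(ρ‖δ)` over incoherent density matrices `δ`. -/
noncomputable def Cmin {n : Type*} [Fintype n] [DecidableEq n] (ρ : Matrix n n ℂ) : ℝ :=
  sInf {x | ∃ δ, IsDensityMatrix δ ∧ IsIncoherent δ ∧ x = Dmin ρ δ}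

/-- Max-entropy of coherence: infimum of `D_max(ρ‖δ)` over incoherent density matrices `δ`. -/
noncomputable def Cmax {n : Type*} [Fintype n] [DecidableEq n] (ρ : Matrix n n ℂ) : ℝ :=
  sInf {x | ∃ δ, IsDensityMatrix δ ∧ IsIncoherent δ ∧ x = Dmax ρ δ}

/-- Geometric coherence: infimum of `1 - F(ρ,δ)` over incoherent density matrices `δ`. -/
noncomputable def Cg {n : Type*} [Fintype n] [DecidableEq n] (ρ : Matrix n n ℂ) : ℝ :=
  sInf {x | ∃ δ, IsDensityMatrix δ ∧ IsIncoherent δ ∧ x = 1 - fidelity ρ δ}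

/-- `Tr[ρ log₂ ρ] = Σ λᵢ log₂ λᵢ` over the eigenvalues of a Hermitian `ρ`
(with `0·log₂ 0 = 0`, since `Real.logb 2 0 = 0`). -/
noncomputable def trLog2Self {n : Type*} [Fintype n] [DecidableEq n] (ρ : Matrix n n ℂ) : ℝ :=
  if h : ρ.IsHermitian then ∑ i, h.eigenvalues i * Real.logb 2 (h.eigenvalues i) else 0

/-- Von Neumann entropy `S(ρ) = -Σ λᵢ log₂ λᵢ`. -/
noncomputable def vN {n : Type*} [Fintype n] [DecidableEq n] (ρ : Matrix n n ℂ) : ℝ :=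
  - trLog2Self ρ

/-- `log₂ σ` via the spectral functional calculus. -/
noncomputable def matLog2 {n : Type*} [Fintype n] [DecidableEq n] (σ : Matrix n n ℂ) :
    Matrix n n ℂ :=
  if h : σ.IsHermitian then
    (h.eigenvectorUnitary : Matrix n n ℂ) *
      Matrix.diagonal (fun i => (Real.logb 2 (h.eigenvalues i) : ℂ)) *
      (h.eigenvectorUnitary : Matrix n n ℂ)ᴴ
  else 0

/-- Base-2 Shannon entropy of the distribution `i ↦ |ψ(i)|²`,
which equals `S(Δ(|ψ⟩⟨ψ|))` for a unit vector `ψ`. -/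
noncomputable def shannonOfVec {n : Type*} [Fintype n] (ψ : n → ℂ) : ℝ :=
  - ∑ i, ‖ψ i‖ ^ 2 * Real.logb 2 (‖ψ i‖ ^ 2)

/-- Coherence of formation: infimum of the average dephased pure-state entropy
over all finite pure-state ensembles for `ρ`. -/
noncomputable def Cf {d : ℕ} (ρ : Matrix (Fin d) (Fin d) ℂ) : ℝ :=
  sInf {x | ∃ m : ℕ, ∃ p : Fin m → ℝ, ∃ ψ : Fin m → Fin d → ℂ,
    (∀ j, 0 ≤ p j) ∧ (∑ j, p j) = 1 ∧ (∀ j, (∑ i, ‖ψ j i‖ ^ 2) = 1) ∧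
    (∑ j, (p j : ℂ) • Matrix.vecMulVec (ψ j) (fun i => starRingEnd ℂ (ψ j i))) = ρ ∧
    x = ∑ j, p j * shannonOfVec (ψ j)}

/-- The coherence monotone `C₀`: infimum over pure-state ensembles of
`max_j log₂ T_j`, where `T_j` is the number of nonzero coordinates of `ψ_j`. -/
noncomputable def C0 {d : ℕ} (ρ : Matrix (Fin d) (Fin d) ℂ) : ℝ :=
  sInf {x | ∃ m : ℕ, ∃ p : Fin m → ℝ, ∃ ψ : Fin m → Fin d → ℂ,
    (∀ j, 0 < p j) ∧ (∑ j, p j) = 1 ∧ (∀ j, (∑ i, ‖ψ j i‖ ^ 2) = 1) ∧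
    (∑ j, (p j : ℂ) • Matrix.vecMulVec (ψ j) (fun i => starRingEnd ℂ (ψ j i))) = ρ ∧
    x = ⨆ j, Real.logb 2 ((Finset.univ.filter fun i => ψ j i ≠ 0).card)}

/-- `ψ : ℂ^{d_A} ⊗ ℂ^{d_E}` is a purification of `ρ`. -/
def IsPurification {dA dE : ℕ} (ρ : Matrix (Fin dA) (Fin dA) ℂ)
    (ψ : Fin dA × Fin dE → ℂ) : Prop :=
  (∑ x, ‖ψ x‖ ^ 2) = 1 ∧ ∀ i j, (∑ k, ψ (i, k) * starRingEnd ℂ (ψ (j, k))) = ρ i j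

/-- The state `ρ_{X_A E}` obtained from `|ψ⟩⟨ψ|` by dephasing system `A`. -/
noncomputable def dephasedPur {dA dE : ℕ} (ψ : Fin dA × Fin dE → ℂ) :
    Matrix (Fin dA × Fin dE) (Fin dA × Fin dE) ℂ :=
  fun x y => if x.1 = y.1 then ψ x * starRingEnd ℂ (ψ y) else 0

/-- Conditional min-entropy
`H_min(A|E) = -log₂ inf {Tr σ | σ ⪰ 0, I_A ⊗ σ - ρ_{AE} ⪰ 0}`. -/
noncomputable def HminCond {dA dE : ℕ}
    (ρAE : Matrix (Fin dA × Fin dE) (Fin dA × Fin dE) ℂ) : ℝ :=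
  - Real.logb 2 (sInf {x | ∃ σ : Matrix (Fin dE) (Fin dE) ℂ, σ.PosSemidef ∧
      ((1 : Matrix (Fin dA) (Fin dA) ℂ) ⊗ₖ σ - ρAE).PosSemidef ∧ x = σ.trace.re})

/-- Conditional max-entropy
`H_max(A|E) = log₂ sup {F(I_A ⊗ σ, ρ_{AE}) | σ a density matrix}`. -/
noncomputable def HmaxCond {dA dE : ℕ}
    (ρAE : Matrix (Fin dA × Fin dE) (Fin dA × Fin dE) ℂ) : ℝ :=
  Real.logb 2 (sSup {x | ∃ σ : Matrix (Fin dE) (Fin dE) ℂ, IsDensityMatrix σ ∧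
      x = fidelity ((1 : Matrix (Fin dA) (Fin dA) ℂ) ⊗ₖ σ) ρAE})

/-!
Write `ρ = ∑ pᵢ |uᵢ⟩⟨uᵢ|`, `σ = ∑ qⱼ |vⱼ⟩⟨vⱼ|` and `cᵢⱼ = |⟨uᵢ, vⱼ⟩|²`; each row of `c` sums to `1`.
Since `Re Tr A ≤ Tr √(AᴴA)` for every `A`, taking `A = √σ √ρ` gives
`√F(ρ, σ) ≥ Re Tr (√σ √ρ) = ∑ √(pᵢ qⱼ) cᵢⱼ`, while
`Tr ρ log ρ - Tr ρ log σ = ∑ pᵢ cᵢⱼ (log pᵢ - log qⱼ)`. The claim is then the classical inequality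
`-2 log ∑ √(pᵢ qⱼ) cᵢⱼ ≤ ∑ pᵢ cᵢⱼ (log pᵢ - log qⱼ)`, which is Jensen's inequality for the concave
logarithm with weights `pᵢ cᵢⱼ` at the points `√(qⱼ / pᵢ)`.
-/

open Finset

theorem Real.sum_mul_logb_le_logb_sum_mul {ι : Type*} [Fintype ι] {b : ℝ} (hb : 1 ≤ b)
    (w x : ι → ℝ) (hw : ∀ i, 0 ≤ w i) (hw1 : ∑ i, w i = 1) (hx : ∀ i, w i ≠ 0 → 0 < x i) :
    ∑ i, w i * Real.logb b (x i) ≤ Real.logb b (∑ i, w i * x i) := by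
  have hconc : ConcaveOn ℝ (Set.Ioi 0) (Real.logb b) := by
    have h := strictConcaveOn_log_Ioi.concaveOn.smul (inv_nonneg.mpr (Real.log_nonneg hb))
    simpa only [smul_eq_mul, inv_mul_eq_div, Real.log_div_log] using h
  have hsupp : ∀ f : ι → ℝ, ∑ i ∈ univ.filter (w · ≠ 0), w i * f i = ∑ i, w i * f i :=
    fun f => sum_filter_of_ne fun i _ h => left_ne_zero_of_mul h
  rw [← hsupp, ← hsupp]
  refine hconc.le_map_sum (fun i _ => hw i) ?_ fun i hi => hx i (mem_filter.mp hi).2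
  simpa [sum_filter_ne_zero] using hw1

section Kernel

variable {ι κ : Type*} [Fintype ι] [Fintype κ] (P : ι → ℝ) (q : κ → ℝ) (K : ι → κ → ℝ)

theorem sum_sqrt_mul_sqrt_mul_pos (hP1 : ∑ i, P i = 1) (hq : ∀ j, 0 < q j)
    (hK0 : ∀ i j, 0 ≤ K i j) (hK1 : ∀ i, ∑ j, K i j = 1) :
    0 < ∑ i, ∑ j, √(P i) * √(q j) * K i j := by
  obtain ⟨i, -, hi⟩ := exists_lt_of_sum_lt (f := 0) (s := univ) (g := P) (by simp [hP1])
  obtain ⟨j, -, hj⟩ := exists_lt_of_sum_lt (f := 0) (s := univ) (g := K i) (by simp [hK1 i])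
  have hterm : ∀ i j, 0 ≤ √(P i) * √(q j) * K i j := fun i j => mul_nonneg (by positivity) (hK0 i j)
  refine sum_pos' (fun i _ => sum_nonneg fun j _ => hterm i j) ⟨i, mem_univ _, ?_⟩
  refine sum_pos' (fun j _ => hterm i j) ⟨j, mem_univ _, ?_⟩
  exact mul_pos (mul_pos (Real.sqrt_pos.mpr hi) (Real.sqrt_pos.mpr (hq j))) hj

theorem sum_mul_logb_sub_le_two_mul_logb_sum_sqrt_mul_sqrt {b : ℝ} (hb : 1 ≤ b)
    (hP0 : ∀ i, 0 ≤ P i) (hP1 : ∑ i, P i = 1) (hq : ∀ j, 0 < q j)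
    (hK0 : ∀ i j, 0 ≤ K i j) (hK1 : ∀ i, ∑ j, K i j = 1) :
    ∑ i, ∑ j, P i * Real.logb b (q j) * K i j - ∑ i, P i * Real.logb b (P i) ≤
      2 * Real.logb b (∑ i, ∑ j, √(P i) * √(q j) * K i j) := by
  set w : ι × κ → ℝ := fun p => P p.1 * K p.1 p.2
  set x : ι × κ → ℝ := fun p => √(q p.2 / P p.1)
  have hw1 : ∑ p, w p = 1 := by
    simp only [w, Fintype.sum_prod_type, ← mul_sum, hK1, mul_one, hP1]
  have hx : ∀ p, w p ≠ 0 → 0 < x p := fun p hp =>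
    Real.sqrt_pos.mpr (div_pos (hq p.2) ((hP0 p.1).lt_of_ne' (left_ne_zero_of_mul hp)))
  have hwx : ∀ i j, w (i, j) * x (i, j) = √(P i) * √(q j) * K i j := by
    intro i j
    rcases (hP0 i).eq_or_lt' with hi | hi
    · simp [w, x, hi]
    · have hsqrt := Real.sqrt_pos.mpr hi
      simp only [w, x, Real.sqrt_div' _ hi.le]
      field_simp
      rw [Real.sq_sqrt hi.le]
      ring
  have hwlogx : ∀ i j, 2 * (w (i, j) * Real.logb b (x (i, j))) =
      P i * Real.logb b (q j) * K i j - P i * Real.logb b (P i) * K i j := by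
    intro i j
    rcases (hP0 i).eq_or_lt' with hi | hi
    · simp [w, hi]
    · simp only [w, x, Real.logb, Real.log_sqrt (div_nonneg (hq j).le hi.le),
        Real.log_div (hq j).ne' hi.ne']
      ring
  have hJ := Real.sum_mul_logb_le_logb_sum_mul hb w x (fun p => mul_nonneg (hP0 _) (hK0 _ _)) hw1 hx
  simp only [Fintype.sum_prod_type, hwx] at hJ
  have hdiag : ∀ i, ∑ j, P i * Real.logb b (P i) * K i j = P i * Real.logb b (P i) := fun i => by
    rw [← mul_sum, hK1, mul_one]
  calc _ = 2 * ∑ i, ∑ j, w (i, j) * Real.logb b (x (i, j)) := by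
        simp only [mul_sum, hwlogx, sum_sub_distrib, hdiag]
    _ ≤ _ := by linarith

end Kernel

theorem Matrix.re_conjTranspose_mul_self_apply {m n : Type*} [Fintype m] (M : Matrix m n ℂ)
    (k : n) :
    ((Mᴴ * M) k k).re = ∑ j, ‖M j k‖ ^ 2 := by
  simp [mul_apply, Complex.re_sum, Complex.conj_mul', ← Complex.ofReal_pow]

theorem Matrix.re_mul_conjTranspose_self_apply {m n : Type*} [Fintype n] (M : Matrix m n ℂ)
    (i : m) :
    ((M * Mᴴ) i i).re = ∑ j, ‖M i j‖ ^ 2 := by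
  simp [mul_apply, Complex.re_sum, Complex.mul_conj', ← Complex.ofReal_pow]

theorem re_sum_star_mul_le {n : Type*} [Fintype n] (x y : n → ℂ) :
    (∑ j, star (x j) * y j).re ≤ √(∑ j, ‖x j‖ ^ 2) * √(∑ j, ‖y j‖ ^ 2) := by
  have h := re_inner_le_norm (𝕜 := ℂ) (WithLp.toLp 2 x : EuclideanSpace ℂ n) (WithLp.toLp 2 y)
  simpa [EuclideanSpace.inner_toLp_toLp, EuclideanSpace.norm_eq, dotProduct, mul_comm] using h

section Spectral

variable {n : Type*} [Fintype n] [DecidableEq n]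

theorem Matrix.sum_norm_sq_col_eq_one {U : Matrix n n ℂ} (hU : U ∈ unitaryGroup n ℂ) (k : n) :
    ∑ j, ‖U j k‖ ^ 2 = 1 := by
  rw [← re_conjTranspose_mul_self_apply, ← star_eq_conjTranspose, mem_unitaryGroup_iff'.mp hU]
  simp

theorem Matrix.sum_norm_sq_row_eq_one {U : Matrix n n ℂ} (hU : U ∈ unitaryGroup n ℂ) (i : n) :
    ∑ j, ‖U i j‖ ^ 2 = 1 := by
  rw [← re_mul_conjTranspose_self_apply, ← star_eq_conjTranspose, mem_unitaryGroup_iff.mp hU]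
  simp

theorem matSqrt_of_posSemidef {A : Matrix n n ℂ} (hA : A.PosSemidef) :
    matSqrt A = (hA.1.eigenvectorUnitary : Matrix n n ℂ) *
      diagonal (fun i => (√(hA.1.eigenvalues i) : ℂ)) *
      star (hA.1.eigenvectorUnitary : Matrix n n ℂ) := by
  rw [matSqrt, dif_pos hA]
  rfl

theorem isHermitian_matSqrt (A : Matrix n n ℂ) : (matSqrt A).IsHermitian := by
  by_cases hA : A.PosSemidef
  · rw [matSqrt_of_posSemidef hA, star_eq_conjTranspose]
    exact isHermitian_mul_mul_conjTranspose _
      (isHermitian_diagonal_of_self_adjoint _ (by ext; simp))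
  · rw [matSqrt, dif_neg hA]
    exact isHermitian_zero

theorem matSqrt_mul_self {A : Matrix n n ℂ} (hA : A.PosSemidef) : matSqrt A * matSqrt A = A := by
  refine Eq.trans ?_ (hA.1.spectral_theorem.trans (Unitary.conjStarAlgAut_apply _ _)).symm
  rw [matSqrt_of_posSemidef hA]
  set U : Matrix n n ℂ := ↑hA.1.eigenvectorUnitary
  have hUU : star U * U = 1 := Matrix.mem_unitaryGroup_iff'.mp (SetLike.coe_mem _)
  calc _ = U * diagonal (fun i => (√(hA.1.eigenvalues i) : ℂ)) * (star U * U) *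
        diagonal (fun i => (√(hA.1.eigenvalues i) : ℂ)) * star U := by simp only [Matrix.mul_assoc]
    _ = _ := by
      rw [hUU, Matrix.mul_one, Matrix.mul_assoc U, diagonal_mul_diagonal]
      congr 3
      ext i
      simp [← Complex.ofReal_mul, Real.mul_self_sqrt (hA.eigenvalues_nonneg i)]

theorem re_trace_conj_diagonal_mul_conj_diagonal (U V : Matrix n n ℂ) (a b : n → ℝ) :
    ((U * diagonal (fun i => (a i : ℂ)) * star U) *
      (V * diagonal (fun j => (b j : ℂ)) * star V)).trace.re =
      ∑ i, ∑ j, a i * b j * ‖(star U * V) i j‖ ^ 2 := by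
  set W := star U * V
  have hcycle : (U * diagonal (fun i => (a i : ℂ)) * star U) *
      (V * diagonal (fun j => (b j : ℂ)) * star V) =
      U * (diagonal (fun i => (a i : ℂ)) * W * diagonal (fun j => (b j : ℂ)) * star V) := by
    simp only [W, Matrix.mul_assoc]
  have hstar : star V * U = star W := by simp [W]
  rw [hcycle, trace_mul_comm]
  simp only [Matrix.mul_assoc, hstar]
  rw [trace, Complex.re_sum]
  refine sum_congr rfl fun i _ => ?_
  rw [diag_apply, diagonal_mul, mul_apply, mul_sum, Complex.re_sum]
  refine sum_congr rfl fun j _ => ?_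
  rw [diagonal_mul, star_apply, mul_left_comm (W i j), RCLike.star_def, Complex.mul_conj']
  norm_cast
  ring

/- In an orthonormal eigenbasis `uₖ` of `AᴴA` with eigenvalues `eₖ`, `Tr A = ∑ ⟨uₖ, A uₖ⟩` and
`‖A uₖ‖² = eₖ`, so Cauchy–Schwarz bounds each term by `√eₖ`. -/
theorem re_trace_le_re_trace_matSqrt_conjTranspose_mul_self (A : Matrix n n ℂ) :
    A.trace.re ≤ (matSqrt (Aᴴ * A)).trace.re := by
  have hB := posSemidef_conjTranspose_mul_self A
  set U : Matrix n n ℂ := ↑hB.1.eigenvectorUnitary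
  set e := hB.1.eigenvalues
  have hU : U ∈ unitaryGroup n ℂ := SetLike.coe_mem _
  have hdiag : (A * U)ᴴ * (A * U) = diagonal (fun k => (e k : ℂ)) := by
    have h := hB.1.conjStarAlgAut_star_eigenvectorUnitary
    rw [Unitary.conjStarAlgAut_star_apply] at h
    rw [conjTranspose_mul, ← star_eq_conjTranspose U]
    calc _ = star U * (Aᴴ * A) * U := by simp only [Matrix.mul_assoc]
      _ = _ := h
  have hcol : ∀ k, ∑ j, ‖(A * U) j k‖ ^ 2 = e k := fun k => by
    rw [← re_conjTranspose_mul_self_apply, hdiag, diagonal_apply_eq, Complex.ofReal_re]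
  have hsqrt : (matSqrt (Aᴴ * A)).trace.re = ∑ k, √(e k) := by
    rw [matSqrt_of_posSemidef hB, trace_mul_cycle, mem_unitaryGroup_iff'.mp hU, Matrix.one_mul,
      trace_diagonal, Complex.re_sum]
    simp only [Complex.ofReal_re]
    rfl
  have htrace : A.trace = ∑ k, ∑ j, star (U j k) * (A * U) j k := by
    calc A.trace = (star U * (A * U)).trace := by
          rw [trace_mul_comm, Matrix.mul_assoc, mem_unitaryGroup_iff.mp hU, Matrix.mul_one]
      _ = _ := rfl
  rw [htrace, hsqrt, Complex.re_sum]
  gcongr with k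
  calc _ ≤ √(∑ j, ‖U j k‖ ^ 2) * √(∑ j, ‖(A * U) j k‖ ^ 2) :=
        re_sum_star_mul_le (fun j => U j k) (fun j => (A * U) j k)
    _ = √(e k) := by rw [sum_norm_sq_col_eq_one hU, hcol, Real.sqrt_one, one_mul]

theorem sq_re_trace_matSqrt_mul_matSqrt_le_fidelity (ρ : Matrix n n ℂ) {σ : Matrix n n ℂ}
    (hσ : σ.PosSemidef) : (matSqrt σ * matSqrt ρ).trace.re ^ 2 ≤ fidelity ρ σ := by
  set A := matSqrt σ * matSqrt ρ
  have hAA : Aᴴ * A = matSqrt ρ * σ * matSqrt ρ := by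
    rw [conjTranspose_mul, (isHermitian_matSqrt ρ).eq, (isHermitian_matSqrt σ).eq]
    calc _ = matSqrt ρ * (matSqrt σ * matSqrt σ) * matSqrt ρ := by simp only [A, Matrix.mul_assoc]
      _ = _ := by rw [matSqrt_mul_self hσ]
  have hle := re_trace_le_re_trace_matSqrt_conjTranspose_mul_self A
  have hle_neg := re_trace_le_re_trace_matSqrt_conjTranspose_mul_self (-A)
  rw [conjTranspose_neg, neg_mul_neg, trace_neg, Complex.neg_re] at hle_neg
  rw [fidelity, ← hAA]
  exact sq_le_sq' (by linarith) hle

theorem matLog2_of_isHermitian {A : Matrix n n ℂ} (hA : A.IsHermitian) :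
    matLog2 A = (hA.eigenvectorUnitary : Matrix n n ℂ) *
      diagonal (fun i => (Real.logb 2 (hA.eigenvalues i) : ℂ)) *
      star (hA.eigenvectorUnitary : Matrix n n ℂ) := by
  rw [matLog2, dif_pos hA]
  rfl

noncomputable def Matrix.IsHermitian.eigenOverlap {A B : Matrix n n ℂ} (hA : A.IsHermitian)
    (hB : B.IsHermitian) (i j : n) : ℝ :=
  ‖(star (hA.eigenvectorUnitary : Matrix n n ℂ) * hB.eigenvectorUnitary) i j‖ ^ 2

theorem Matrix.IsHermitian.sum_eigenOverlap {A B : Matrix n n ℂ} (hA : A.IsHermitian)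
    (hB : B.IsHermitian) (i : n) : ∑ j, hA.eigenOverlap hB i j = 1 :=
  sum_norm_sq_row_eq_one (mul_mem (Unitary.star_mem (SetLike.coe_mem _)) (SetLike.coe_mem _)) i

theorem re_trace_matSqrt_mul_matSqrt {A B : Matrix n n ℂ} (hA : A.PosSemidef) (hB : B.PosSemidef) :
    (matSqrt B * matSqrt A).trace.re =
      ∑ i, ∑ j, √(hA.1.eigenvalues i) * √(hB.1.eigenvalues j) * hA.1.eigenOverlap hB.1 i j := by
  rw [trace_mul_comm, matSqrt_of_posSemidef hA, matSqrt_of_posSemidef hB,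
    re_trace_conj_diagonal_mul_conj_diagonal]
  rfl

theorem re_trace_mul_matLog2 {A B : Matrix n n ℂ} (hA : A.IsHermitian) (hB : B.IsHermitian) :
    (A * matLog2 B).trace.re =
      ∑ i, ∑ j, hA.eigenvalues i * Real.logb 2 (hB.eigenvalues j) * hA.eigenOverlap hB i j := by
  rw [matLog2_of_isHermitian hB]
  conv_lhs => rw [hA.spectral_theorem, Unitary.conjStarAlgAut_apply]
  exact re_trace_conj_diagonal_mul_conj_diagonal _ _ _ _

end Spectral

theorem stmt4_general {d : ℕ} (ρ σ : Matrix (Fin d) (Fin d) ℂ) (hρ : IsDensityMatrix ρ)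
    (hσpd : σ.PosDef) :
    - Real.logb 2 (fidelity ρ σ) ≤ trLog2Self ρ - ((ρ * matLog2 σ).trace).re := by
  obtain ⟨hρP, hρtr⟩ := hρ
  have hσP := hσpd.posSemidef
  have htr : ∑ i, hρP.1.eigenvalues i = 1 := by
    simpa using congrArg Complex.re (hρP.1.trace_eq_sum_eigenvalues.symm.trans hρtr)
  have hK0 : ∀ i j, 0 ≤ hρP.1.eigenOverlap hσP.1 i j := fun _ _ => sq_nonneg _
  have hK1 := hρP.1.sum_eigenOverlap hσP.1
  have hfid := sq_re_trace_matSqrt_mul_matSqrt_le_fidelity ρ hσP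
  rw [re_trace_matSqrt_mul_matSqrt hρP hσP] at hfid
  have hpos := sum_sqrt_mul_sqrt_mul_pos _ _ _ htr hσpd.eigenvalues_pos hK0 hK1
  have hJ := sum_mul_logb_sub_le_two_mul_logb_sum_sqrt_mul_sqrt _ _ _ one_le_two
    hρP.eigenvalues_nonneg htr hσpd.eigenvalues_pos hK0 hK1
  have hlogF := Real.logb_le_logb_of_le one_lt_two (pow_pos hpos 2) hfid
  rw [Real.logb_pow, Nat.cast_ofNat] at hlogF
  rw [trLog2Self, dif_pos hρP.1, re_trace_mul_matLog2 hρP.1 hσP.1]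
  linarith

/-- `D_min(ρ‖σ) ≤ S(ρ‖σ)` for density matrices with `σ` positive definite. -/
theorem stmt4 {d : ℕ} (ρ σ : Matrix (Fin d) (Fin d) ℂ) (hρ : IsDensityMatrix ρ)
    (hσ : IsDensityMatrix σ) (hσpd : σ.PosDef) :
    - Real.logb 2 (fidelity ρ σ) ≤ trLog2Self ρ - ((ρ * matLog2 σ).trace).re :=
  stmt4_general ρ σ hρ hσpd
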